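/- arXiv:2302.07551 — 3 statements merged into one kernel-verified Lean document; each statement's English description precedes it below -/
import Mathlib

section
/- Let P be an N×N real matrix (N ≥ 1) that is irreducible and row-stochastic, i.e., all entries of P are nonnegative and P·e = e where e is the all-ones vector. Then the matrix Qᵀ = I − Pᵀ has rank N − 1, and there exists a vector π ∈ ℝ^N with all entries strictly positive and eᵀπ = 1 such that (I − Pᵀ)π = 0; moreover the kernel of I − Pᵀ is exactly the span of π. -/
open Matrix

/-- `P` is irreducible: the directed graph with an edge `i → j` whenever `P i j ≠ 0`
is strongly connected. -/
def MatrixIrreducible {N : ℕ} (P : Matrix (Fin N) (Fin N) ℝ) : Prop :=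
  ∀ i j : Fin N, Relation.TransGen (fun a b => P a b ≠ 0) i j

section Aux

variable {N : ℕ} (P : Matrix (Fin N) (Fin N) ℝ)

/-- A fixed vector of an irreducible stochastic matrix is constant. -/
lemma aux_const_of_fixed (hN : 1 ≤ N)
    (hnn : ∀ i j, 0 ≤ P i j) (hrow : ∀ i, ∑ j, P i j = 1)
    (hirr : MatrixIrreducible P) (v : Fin N → ℝ) (hv : P.mulVec v = v) :
    ∀ i j : Fin N, v i = v j := by
  haveI : Nonempty (Fin N) := ⟨⟨0, hN⟩⟩
  obtain ⟨i0, -, hi0⟩ := Finset.exists_min_image Finset.univ v Finset.univ_nonempty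
  set m := v i0 with hm
  have key : ∀ a b : Fin N, v a = m → P a b ≠ 0 → v b = m := by
    intro a b hva hab
    have hva' : ∑ j, P a j * v j = m := by
      have := congrFun hv a
      simpa [Matrix.mulVec, dotProduct, hva] using this
    have hsum : ∑ j, P a j * (v j - m) = 0 := by
      have : ∑ j, P a j * (v j - m) = (∑ j, P a j * v j) - (∑ j, P a j) * m := by
        rw [Finset.sum_mul, ← Finset.sum_sub_distrib]
        exact Finset.sum_congr rfl fun j _ => by ring
      rw [this, hva', hrow a, one_mul, sub_self]
    have hz := (Finset.sum_eq_zero_iff_of_nonneg (fun j _ =>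
      mul_nonneg (hnn a j) (sub_nonneg.mpr (hi0 j (Finset.mem_univ j))))).mp hsum
    have := hz b (Finset.mem_univ b)
    rcases mul_eq_zero.mp this with h | h
    · exact absurd h hab
    · linarith [sub_eq_zero.mp h]
  have hall : ∀ j, v j = m := by
    intro j
    have h := hirr i0 j
    induction h with
    | single hr => exact key _ _ rfl hr
    | tail _ hr ih => exact key _ _ ih hr
  intro i j; rw [hall i, hall j]

/-- A nonnegative nonzero fixed vector of `Pᵀ` is strictly positive. -/
lemma aux_pos_of_fixed
    (hnn : ∀ i j, 0 ≤ P i j) (hirr : MatrixIrreducible P) (w : Fin N → ℝ)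
    (hw0 : ∀ i, 0 ≤ w i) (hwne : w ≠ 0) (hfix : Pᵀ.mulVec w = w) :
    ∀ j, 0 < w j := by
  obtain ⟨i0, hi0⟩ := Function.ne_iff.mp hwne
  have hi0pos : 0 < w i0 := lt_of_le_of_ne (hw0 i0) (Ne.symm hi0)
  have key : ∀ a b : Fin N, 0 < w a → P a b ≠ 0 → 0 < w b := by
    intro a b hwa hab
    have hwb : w b = ∑ i, P i b * w i := by
      have := congrFun hfix b
      simp only [Matrix.mulVec, dotProduct, Matrix.transpose_apply] at this
      exact this.symm
    have hle : P a b * w a ≤ ∑ i, P i b * w i :=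
      Finset.single_le_sum (fun i _ => mul_nonneg (hnn i b) (hw0 i)) (Finset.mem_univ a)
    have : 0 < P a b * w a :=
      mul_pos (lt_of_le_of_ne (hnn a b) (Ne.symm hab)) hwa
    rw [hwb]; linarith
  intro j
  have h := hirr i0 j
  induction h with
  | single hr => exact key _ _ hi0pos hr
  | tail _ hr ih => exact key _ _ ih hr

/-- The absolute value of a fixed vector of `Pᵀ` is again fixed. -/
lemma aux_abs_fixed
    (hnn : ∀ i j, 0 ≤ P i j) (hrow : ∀ i, ∑ j, P i j = 1)
    (u : Fin N → ℝ) (hfix : Pᵀ.mulVec u = u) :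
    Pᵀ.mulVec (fun i => |u i|) = fun i => |u i| := by
  have happ : ∀ j, Pᵀ.mulVec u j = ∑ i, P i j * u i := by
    intro j; simp [Matrix.mulVec, dotProduct, Matrix.transpose_apply]
  have hle : ∀ j, |u j| ≤ ∑ i, P i j * |u i| := by
    intro j
    calc |u j| = |∑ i, P i j * u i| := by rw [← happ j, congrFun hfix j]
    _ ≤ ∑ i, |P i j * u i| := Finset.abs_sum_le_sum_abs _ _
    _ = ∑ i, P i j * |u i| := by
        refine Finset.sum_congr rfl fun i _ => ?_
        rw [abs_mul, abs_of_nonneg (hnn i j)]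
  have hsums : ∑ j, (∑ i, P i j * |u i|) = ∑ j, |u j| := by
    rw [Finset.sum_comm]
    refine Finset.sum_congr rfl fun i _ => ?_
    rw [← Finset.sum_mul, hrow i, one_mul]
  have hdiff : ∑ j, ((∑ i, P i j * |u i|) - |u j|) = 0 := by
    rw [Finset.sum_sub_distrib, hsums, sub_self]
  have hz := (Finset.sum_eq_zero_iff_of_nonneg (fun j _ =>
    sub_nonneg.mpr (hle j))).mp hdiff
  funext j
  have := hz j (Finset.mem_univ j)
  have heq : ∑ i, P i j * |u i| = |u j| := by linarith [sub_eq_zero.mp this]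
  simp only [Matrix.mulVec, dotProduct, Matrix.transpose_apply]
  exact heq

end Aux

theorem stationary_distribution_exists_and_kernel
    {N : ℕ} (hN : 1 ≤ N) (P : Matrix (Fin N) (Fin N) ℝ)
    (hnn : ∀ i j, 0 ≤ P i j)
    (hrow : ∀ i, ∑ j, P i j = 1)
    (hirr : MatrixIrreducible P) :
    ((1 : Matrix (Fin N) (Fin N) ℝ) - Pᵀ).rank = N - 1 ∧
    ∃ π : Fin N → ℝ, (∀ i, 0 < π i) ∧ (∑ i, π i) = 1 ∧
      ((1 : Matrix (Fin N) (Fin N) ℝ) - Pᵀ).mulVec π = 0 ∧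
      LinearMap.ker ((1 : Matrix (Fin N) (Fin N) ℝ) - Pᵀ).mulVecLin
        = Submodule.span ℝ {π} := by
  haveI : Nonempty (Fin N) := ⟨⟨0, hN⟩⟩
  set Q : Matrix (Fin N) (Fin N) ℝ := 1 - Pᵀ with hQ
  set A : Matrix (Fin N) (Fin N) ℝ := 1 - P with hA
  have hQA : Q = Aᵀ := by rw [hQ, hA, Matrix.transpose_sub, Matrix.transpose_one]
  -- membership in kernels
  have hkerA : ∀ v : Fin N → ℝ, A.mulVec v = 0 ↔ P.mulVec v = v := by
    intro v
    rw [hA, Matrix.sub_mulVec, Matrix.one_mulVec, sub_eq_zero, eq_comm]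
  have hkerQ : ∀ v : Fin N → ℝ, Q.mulVec v = 0 ↔ Pᵀ.mulVec v = v := by
    intro v
    rw [hQ, Matrix.sub_mulVec, Matrix.one_mulVec, sub_eq_zero, eq_comm]
  -- the all-ones vector
  set e : Fin N → ℝ := fun _ => 1 with he
  have hePe : P.mulVec e = e := by
    funext i; simp [Matrix.mulVec, dotProduct, he, hrow i]
  have hene : e ≠ 0 := by
    intro h
    have := congrFun h ⟨0, hN⟩
    simp [he] at this
  -- kernel of A is the span of e
  have hkerAspan : LinearMap.ker A.mulVecLin = Submodule.span ℝ {e} := by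
    apply le_antisymm
    · intro v hv
      rw [LinearMap.mem_ker, Matrix.mulVecLin_apply] at hv
      have hvfix := (hkerA v).mp hv
      have hconst := aux_const_of_fixed P hN hnn hrow hirr v hvfix
      have : v = v ⟨0, hN⟩ • e := by
        funext i; simp [he, hconst i ⟨0, hN⟩]
      rw [this]
      exact Submodule.smul_mem _ _ (Submodule.mem_span_singleton_self e)
    · rw [Submodule.span_le, Set.singleton_subset_iff]
      rw [SetLike.mem_coe, LinearMap.mem_ker, Matrix.mulVecLin_apply]
      exact (hkerA e).mpr hePe
  -- rank of A
  have hfinN : Module.finrank ℝ (Fin N → ℝ) = N := Module.finrank_fin_fun ℝ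
  have hrn := LinearMap.finrank_range_add_finrank_ker A.mulVecLin
  rw [hfinN, hkerAspan, finrank_span_singleton hene] at hrn
  have hrankA : A.rank = N - 1 := by
    have : A.rank + 1 = N := hrn
    omega
  have hrankQ : Q.rank = N - 1 := by rw [hQA, Matrix.rank_transpose, hrankA]
  refine ⟨hrankQ, ?_⟩
  -- kernel of Q has dimension 1
  have hrnQ := LinearMap.finrank_range_add_finrank_ker Q.mulVecLin
  rw [hfinN] at hrnQ
  have hkerQdim : Module.finrank ℝ (LinearMap.ker Q.mulVecLin) = 1 := by
    have hr : Module.finrank ℝ (LinearMap.range Q.mulVecLin) = N - 1 := hrankQ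
    omega
  -- get a nonzero kernel vector
  have hkerne : LinearMap.ker Q.mulVecLin ≠ ⊥ := by
    intro h
    rw [h, finrank_bot] at hkerQdim
    omega
  obtain ⟨u, hu, hune⟩ := Submodule.exists_mem_ne_zero_of_ne_bot hkerne
  rw [LinearMap.mem_ker, Matrix.mulVecLin_apply] at hu
  have hufix := (hkerQ u).mp hu
  -- |u| is also fixed, nonnegative and nonzero
  set w : Fin N → ℝ := fun i => |u i| with hw
  have hwfix : Pᵀ.mulVec w = w := aux_abs_fixed P hnn hrow u hufix
  have hw0 : ∀ i, 0 ≤ w i := fun i => abs_nonneg _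
  have hwne : w ≠ 0 := by
    intro h
    apply hune
    funext i
    have := congrFun h i
    simpa [hw, abs_eq_zero] using this
  have hwpos := aux_pos_of_fixed P hnn hirr w hw0 hwne hwfix
  -- normalize
  set s : ℝ := ∑ i, w i with hs
  have hspos : 0 < s := by
    rw [hs]
    exact Finset.sum_pos (fun i _ => hwpos i) Finset.univ_nonempty
  refine ⟨fun i => w i / s, fun i => div_pos (hwpos i) hspos, ?_, ?_, ?_⟩
  · rw [← Finset.sum_div, ← hs, div_self (ne_of_gt hspos)]
  · have : Pᵀ.mulVec (fun i => w i / s) = fun i => w i / s := by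
      have : (fun i => w i / s) = s⁻¹ • w := by
        funext i; simp [div_eq_inv_mul, smul_eq_mul]
      rw [this, Matrix.mulVec_smul, hwfix]
    rw [hkerQ]
    exact this
  · -- kernel equals span of π
    set π : Fin N → ℝ := fun i => w i / s with hπ
    have hπker : π ∈ LinearMap.ker Q.mulVecLin := by
      rw [LinearMap.mem_ker, Matrix.mulVecLin_apply, hkerQ]
      have : π = s⁻¹ • w := by
        funext i; simp [hπ, div_eq_inv_mul, smul_eq_mul]
      rw [this, Matrix.mulVec_smul, hwfix]
    have hπne : π ≠ 0 := by
      intro h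
      have := congrFun h ⟨0, hN⟩
      simp only [hπ, Pi.zero_apply] at this
      exact absurd this (ne_of_gt (div_pos (hwpos _) hspos))
    symm
    apply Submodule.eq_of_le_of_finrank_eq
    · rw [Submodule.span_le, Set.singleton_subset_iff]
      exact hπker
    · rw [hkerQdim, finrank_span_singleton hπne]
end

section
/- Let P be an N×N irreducible row-stochastic real matrix and let I − Pᵀ = M − N be a regular splitting (M invertible, M⁻¹ ≥ 0 and N ≥ 0 entrywise). Then the spectral radius of the iteration matrix M⁻¹N equals 1, and λ = 1 is a simple eigenvalue of M⁻¹N (its algebraic multiplicity as a root of the characteristic polynomial of M⁻¹N is one). -/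
open Matrix Polynomial

/-!
Write `T = M⁻¹ * Nmat`. Since `1ᵀ (1 - Pᵀ) = 0`, the vector `w = 1ᵀ Nmat` satisfies
`wᵀ M⁻¹ = 1ᵀ`, so `w ≥ 0` is a nonzero left fixed vector of `T ≥ 0`. For an eigenvector
`T x = z x`, pairing `|z| |x| ≤ T |x|` with `w` gives `|z| ≤ 1`.

The fixed vectors of `T` are the kernel of `1 - Pᵀ`, i.e. the stationary vectors of `P`;
by irreducibility they form the line through a positive vector `π`. As `w ⬝ᵥ π > 0` while
`w` annihilates the range of `T - 1`, that line meets the range trivially, so there is no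
Jordan chain at `1` and the eigenvalue is algebraically simple.
-/

namespace Module.End

lemma maxGenEigenspace_eq_eigenspace {R M : Type*} [CommRing R] [AddCommGroup M] [Module R M]
    {f : End R M} {μ : R}
    (h : ∀ x, f x - μ • x ∈ f.eigenspace μ → x ∈ f.eigenspace μ) :
    f.maxGenEigenspace μ = f.eigenspace μ := by
  refine le_antisymm (fun x hx => ?_) eigenspace_le_maxGenEigenspace
  obtain ⟨k, hk⟩ := (mem_maxGenEigenspace f μ x).1 hx
  clear hx
  induction k generalizing x with
  | zero => simp_all
  | succ k ih =>
    have hsub : (f - μ • 1) x = f x - μ • x := by simp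
    rw [pow_succ, mul_apply, hsub] at hk
    exact h x (ih _ hk)

end Module.End

namespace Matrix

variable {ι R : Type*} [Fintype ι]

lemma dotProduct_pos_of_nonneg_of_pos [Semiring R] [PartialOrder R] [IsStrictOrderedRing R]
    {v w : ι → R} (hv : 0 ≤ v) (hv0 : v ≠ 0) (hw : ∀ i, 0 < w i) : 0 < v ⬝ᵥ w := by
  obtain ⟨i, hi⟩ := Function.ne_iff.1 hv0
  exact Finset.sum_pos' (fun j _ => mul_nonneg (hv j) (hw j).le)
    ⟨i, Finset.mem_univ i, mul_pos ((hv i).lt_of_ne' hi) (hw i)⟩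

lemma vecMul_nonneg [Semiring R] [PartialOrder R] [IsOrderedRing R] {x : ι → R}
    {B : Matrix ι ι R} (hx : 0 ≤ x) (hB : ∀ i j, 0 ≤ B i j) : 0 ≤ x ᵥ* B :=
  fun j => Finset.sum_nonneg fun i _ => mul_nonneg (hx i) (hB i j)

lemma mul_apply_nonneg [Semiring R] [PartialOrder R] [IsOrderedRing R] {A B : Matrix ι ι R}
    (hA : ∀ i j, 0 ≤ A i j) (hB : ∀ i j, 0 ≤ B i j) (i j : ι) : 0 ≤ (A * B) i j :=
  Finset.sum_nonneg fun k _ => mul_nonneg (hA i k) (hB k j)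

lemma mul_apply_eq_zero_of_one_vecMul_apply_eq_zero [Semiring R] [PartialOrder R]
    [IsOrderedRing R] (A : Matrix ι ι R) {B : Matrix ι ι R} (hB : ∀ i j, 0 ≤ B i j) {j : ι}
    (hj : (1 ᵥ* B) j = 0) (i : ι) : (A * B) i j = 0 := by
  have hcol := (Finset.sum_eq_zero_iff_of_nonneg fun k _ => hB k j).1
    (by simpa [vecMul, dotProduct] using hj)
  exact Finset.sum_eq_zero fun k hk => mul_eq_zero_of_right _ (hcol k hk)

lemma rootMultiplicity_charpoly_map [DecidableEq ι] [CommRing R] {S : Type*}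
    [CommRing S] {f : R →+* S} (hf : Function.Injective f) (T : Matrix ι ι R)
    (a : R) : (T.map f).charpoly.rootMultiplicity (f a) = T.charpoly.rootMultiplicity a := by
  rw [charpoly_map, ← eq_rootMultiplicity_map hf]

theorem rootMultiplicity_charpoly_eq_one [DecidableEq ι] [Field R] {T : Matrix ι ι R} {μ : R}
    {v w : ι → R} (hT : Module.End.eigenspace (toLin' T) μ = R ∙ v) (hv : v ≠ 0)
    (hw : w ᵥ* T = μ • w) (hwv : w ⬝ᵥ v ≠ 0) : T.charpoly.rootMultiplicity μ = 1 := by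
  rw [← charpoly_toLin', ← LinearMap.finrank_maxGenEigenspace_eq,
    Module.End.maxGenEigenspace_eq_eigenspace, hT, finrank_span_singleton hv]
  intro x hx
  obtain ⟨c, hc⟩ := Submodule.mem_span_singleton.1 (hT ▸ hx)
  -- the range of `T - μ` is orthogonal to the left eigenvector `w`
  have hcwv : c * (w ⬝ᵥ v) = 0 := by
    rw [← smul_eq_mul, ← dotProduct_smul, hc, toLin'_apply, dotProduct_sub, dotProduct_mulVec,
      hw, dotProduct_smul, smul_dotProduct, sub_self]
  rw [(mul_eq_zero.1 hcwv).resolve_right hwv, zero_smul, eq_comm, sub_eq_zero] at hc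
  exact Module.End.mem_eigenspace_iff.2 hc

lemma norm_mul_norm_le_mulVec_norm {T : Matrix ι ι ℝ} (hT : ∀ i j, 0 ≤ T i j) {z : ℂ}
    {x : ι → ℂ} (hx : T.map Complex.ofReal *ᵥ x = z • x) (i : ι) :
    ‖z‖ * ‖x i‖ ≤ (T *ᵥ fun j => ‖x j‖) i := calc
  ‖z‖ * ‖x i‖ = ‖∑ j, (T i j : ℂ) * x j‖ := by
    rw [← norm_mul, ← smul_eq_mul, ← Pi.smul_apply, ← hx]; rfl
  _ ≤ ∑ j, ‖(T i j : ℂ) * x j‖ := norm_sum_le _ _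
  _ = (T *ᵥ fun j => ‖x j‖) i := by
    simp [mulVec, dotProduct, Complex.norm_real, abs_of_nonneg (hT i _)]

theorem norm_le_one_of_isRoot_charpoly_map [DecidableEq ι] {T : Matrix ι ι ℝ} {w : ι → ℝ}
    (hT : ∀ i j, 0 ≤ T i j) (hw : 0 ≤ w) (hwT : w ᵥ* T ≤ w)
    (hsupp : ∀ j, w j = 0 → ∀ i, T i j = 0) {z : ℂ}
    (hz : (T.map Complex.ofReal).charpoly.IsRoot z) : ‖z‖ ≤ 1 := by
  rw [← charpoly_toLin', ← Module.End.hasEigenvalue_iff_isRoot_charpoly] at hz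
  obtain ⟨x, hx⟩ := hz.exists_hasEigenvector
  set u : ι → ℝ := fun j => ‖x j‖
  have hu : 0 ≤ u := fun j => norm_nonneg _
  have hzu : ‖z‖ • u ≤ T *ᵥ u :=
    norm_mul_norm_le_mulVec_norm hT (by simpa using hx.apply_eq_smul)
  rcases (dotProduct_nonneg_of_nonneg hw hu).eq_or_lt with hwu | hwu
  · -- `u` is supported where `w` vanishes, and there the columns of `T` vanish too
    have hTu : T *ᵥ u = 0 := by
      have hterm := (Finset.sum_eq_zero_iff_of_nonneg fun j _ => mul_nonneg (hw j) (hu j)).1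
        hwu.symm
      funext i
      refine Finset.sum_eq_zero fun j hj => ?_
      rcases mul_eq_zero.1 (hterm j hj) with h | h
      · simp [hsupp j h i]
      · simp [h]
    obtain ⟨i, hi⟩ := Function.ne_iff.1 hx.2
    have hzi : ‖z‖ * u i ≤ 0 := by simpa [hTu] using hzu i
    exact (nonpos_of_mul_nonpos_left hzi (norm_pos_iff.2 hi)).trans zero_le_one
  · refine le_of_mul_le_mul_right ?_ hwu
    calc ‖z‖ * (w ⬝ᵥ u) = w ⬝ᵥ (‖z‖ • u) := by rw [dotProduct_smul, smul_eq_mul]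
      _ ≤ w ⬝ᵥ (T *ᵥ u) := dotProduct_le_dotProduct_of_nonneg_left hzu hw
      _ = (w ᵥ* T) ⬝ᵥ u := dotProduct_mulVec _ _ _
      _ ≤ w ⬝ᵥ u := dotProduct_le_dotProduct_of_nonneg_right hwT hu
      _ = 1 * (w ⬝ᵥ u) := (one_mul _).symm

section Splitting

variable [DecidableEq ι] [Field R] {M N : Matrix ι ι R}

lemma inv_mul_mulVec_eq_self_iff (hM : IsUnit M.det) {x : ι → R} :
    (M⁻¹ * N) *ᵥ x = x ↔ (M - N) *ᵥ x = 0 := by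
  rw [← mulVec_mulVec, sub_mulVec, sub_eq_zero, eq_comm (a := M *ᵥ x)]
  constructor
  · intro h
    calc N *ᵥ x = M *ᵥ (M⁻¹ *ᵥ (N *ᵥ x)) := by
          rw [mulVec_mulVec, mul_nonsing_inv _ hM, one_mulVec]
      _ = M *ᵥ x := by rw [h]
  · intro h
    rw [h, mulVec_mulVec, nonsing_inv_mul _ hM, one_mulVec]

lemma vecMul_vecMul_inv_eq_of_vecMul_sub_eq_zero (hM : IsUnit M.det) {u : ι → R}
    (hu : u ᵥ* (M - N) = 0) : (u ᵥ* N) ᵥ* M⁻¹ = u := by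
  rw [vecMul_sub, sub_eq_zero] at hu
  rw [← hu, vecMul_vecMul, mul_nonsing_inv _ hM, vecMul_one]

end Splitting

section Stochastic

variable [DecidableEq ι]

lemma one_sub_transpose_mulVec_eq_zero_iff [CommRing R] (P : Matrix ι ι R) (x : ι → R) :
    (1 - Pᵀ) *ᵥ x = 0 ↔ x ᵥ* P = x := by
  rw [sub_mulVec, one_mulVec, mulVec_transpose, sub_eq_zero, eq_comm]

lemma sum_vecMul_of_mem_rowStochastic [Semiring R] [PartialOrder R] [IsOrderedRing R]
    {P : Matrix ι ι R} (hP : P ∈ rowStochastic R ι) (x : ι → R) :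
    ∑ j, (x ᵥ* P) j = ∑ j, x j := by
  simp only [← dotProduct_one, ← dotProduct_mulVec, hP.2]

lemma abs_vecMul_eq_self [Ring R] [LinearOrder R] [IsOrderedRing R]
    {P : Matrix ι ι R} (hP : P ∈ rowStochastic R ι) {x : ι → R} (hx : x ᵥ* P = x) :
    |x| ᵥ* P = |x| := by
  have hle : ∀ j, |x| j ≤ (|x| ᵥ* P) j := fun j => calc
    |x| j = |∑ i, x i * P i j| := by rw [Pi.abs_apply]; exact congrArg _ (congrFun hx j).symm
    _ ≤ ∑ i, |x i * P i j| := Finset.abs_sum_le_sum_abs _ _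
    _ = (|x| ᵥ* P) j := by simp [vecMul, dotProduct, abs_mul, abs_of_nonneg (hP.1 _ j)]
  -- a pointwise inequality between vectors with equal sums is an equality
  funext j
  exact ((Finset.sum_eq_sum_iff_of_le fun j _ => hle j).1
    (sum_vecMul_of_mem_rowStochastic hP |x|).symm j (Finset.mem_univ j)).symm

lemma exists_ne_zero_vecMul_eq_self [Nonempty ι] [Field R] [LinearOrder R]
    [IsStrictOrderedRing R] {P : Matrix ι ι R} (hP : P ∈ rowStochastic R ι) :
    ∃ x ≠ 0, x ᵥ* P = x := by
  have hdet : (1 - P).det = 0 :=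
    exists_mulVec_eq_zero_iff.1 ⟨1, one_ne_zero, by rw [sub_mulVec, one_mulVec, hP.2, sub_self]⟩
  obtain ⟨x, hx, hxP⟩ := exists_vecMul_eq_zero_iff.2 hdet
  exact ⟨x, hx, by rwa [vecMul_sub, vecMul_one, sub_eq_zero, eq_comm] at hxP⟩

end Stochastic

section Irreducible

variable {N : ℕ} {P : Matrix (Fin N) (Fin N) ℝ}

lemma eq_zero_of_vecMul_eq_self_of_apply_eq_zero (hPnn : ∀ i j, 0 ≤ P i j)
    (hirr : MatrixIrreducible P) {y : Fin N → ℝ} (hy0 : 0 ≤ y) (hy : y ᵥ* P = y) {j : Fin N}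
    (hj : y j = 0) : y = 0 := by
  -- `y b = ∑ a, y a * P a b` has nonnegative terms, so a zero of `y` propagates to every
  -- predecessor in the graph of `P`
  have back : ∀ a b, P a b ≠ 0 → y b = 0 → y a = 0 := fun a b hab hb => by
    have hsum : ∑ k, y k * P k b = 0 := (congrFun hy b).trans hb
    have := (Finset.sum_eq_zero_iff_of_nonneg fun k _ => mul_nonneg (hy0 k) (hPnn k b)).1 hsum
      a (Finset.mem_univ a)
    exact (mul_eq_zero.1 this).resolve_right hab
  have path : ∀ a b, Relation.TransGen (fun a b => P a b ≠ 0) a b → y b = 0 → y a = 0 := by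
    intro a b h
    induction h with
    | single h => exact back _ _ h
    | tail _ h ih => exact fun hb => ih (back _ _ h hb)
  exact funext fun i => path i j (hirr i j) hj

lemma pos_of_vecMul_eq_self (hPnn : ∀ i j, 0 ≤ P i j) (hirr : MatrixIrreducible P)
    {y : Fin N → ℝ} (hy0 : 0 ≤ y) (hy : y ᵥ* P = y) (hne : y ≠ 0) (i : Fin N) : 0 < y i :=
  (hy0 i).lt_of_ne fun h =>
    hne (eq_zero_of_vecMul_eq_self_of_apply_eq_zero hPnn hirr hy0 hy h.symm)

lemma exists_smul_eq_of_vecMul_eq_self (hPnn : ∀ i j, 0 ≤ P i j) (hirr : MatrixIrreducible P)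
    {π x : Fin N → ℝ} (hπ : ∀ i, 0 < π i) (hπP : π ᵥ* P = π) (hxP : x ᵥ* P = x) :
    ∃ c : ℝ, c • π = x := by
  rcases isEmpty_or_nonempty (Fin N) with _ | _
  · exact ⟨0, Subsingleton.elim _ _⟩
  -- subtracting the largest multiple of `π` that stays below `x` leaves a nonnegative
  -- fixed vector with a zero entry
  obtain ⟨i₀, -, hmin⟩ := Finset.exists_min_image Finset.univ (fun i => x i / π i)
    Finset.univ_nonempty
  set c := x i₀ / π i₀
  have hnonneg : 0 ≤ x - c • π := fun i => by
    simpa using (le_div_iff₀ (hπ i)).1 (hmin i (Finset.mem_univ i))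
  have hfix : (x - c • π) ᵥ* P = x - c • π := by rw [sub_vecMul, smul_vecMul, hxP, hπP]
  have hzero : (x - c • π) i₀ = 0 := by simp [c, div_mul_cancel₀ _ (hπ i₀).ne']
  exact ⟨c, (sub_eq_zero.1 <|
    eq_zero_of_vecMul_eq_self_of_apply_eq_zero hPnn hirr hnonneg hfix hzero).symm⟩

theorem exists_pos_forall_vecMul_eq_self_iff_mem_span [Nonempty (Fin N)]
    (hP : P ∈ rowStochastic ℝ (Fin N)) (hirr : MatrixIrreducible P) :
    ∃ π : Fin N → ℝ, (∀ i, 0 < π i) ∧ ∀ x, x ᵥ* P = x ↔ x ∈ ℝ ∙ π := by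
  obtain ⟨x, hx0, hx⟩ := exists_ne_zero_vecMul_eq_self hP
  have habs := abs_vecMul_eq_self hP hx
  have hpos := pos_of_vecMul_eq_self hP.1 hirr (abs_nonneg x) habs (mt (Pi.abs_eq_zero x).1 hx0)
  refine ⟨|x|, hpos, fun y => ?_⟩
  rw [Submodule.mem_span_singleton]
  refine ⟨exists_smul_eq_of_vecMul_eq_self hP.1 hirr hpos habs, ?_⟩
  rintro ⟨c, rfl⟩
  rw [smul_vecMul, habs]

end Irreducible

end Matrix

theorem spectral_radius_one_and_simple
    {N : ℕ} (hN : 1 ≤ N) (P M Nmat : Matrix (Fin N) (Fin N) ℝ)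
    (hnn : ∀ i j, 0 ≤ P i j)
    (hrow : ∀ i, ∑ j, P i j = 1)
    (hirr : MatrixIrreducible P)
    (hsplit : (1 : Matrix (Fin N) (Fin N) ℝ) - Pᵀ = M - Nmat)
    (hM : IsUnit M.det)
    (hMinv_nn : ∀ i j, 0 ≤ M⁻¹ i j)
    (hN_nn : ∀ i j, 0 ≤ Nmat i j) :
    -- the spectral radius of the iteration matrix `M⁻¹ * Nmat` equals 1:
    -- every complex eigenvalue has modulus at most 1 and 1 itself is an eigenvalue,
    (∀ z : ℂ, (((M⁻¹ * Nmat).map (Complex.ofReal)).charpoly).IsRoot z → ‖z‖ ≤ 1) ∧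
    (((M⁻¹ * Nmat).map (Complex.ofReal)).charpoly).IsRoot 1 ∧
    -- and 1 is a simple eigenvalue: its algebraic multiplicity is one
    (((M⁻¹ * Nmat).map (Complex.ofReal)).charpoly).rootMultiplicity 1 = 1 := by
  have : Nonempty (Fin N) := ⟨⟨0, hN⟩⟩
  have hP : P ∈ rowStochastic ℝ (Fin N) := mem_rowStochastic_iff_sum.2 ⟨hnn, hrow⟩
  obtain ⟨π, hπpos, hπ⟩ := exists_pos_forall_vecMul_eq_self_iff_mem_span hP hirr
  set T := M⁻¹ * Nmat
  set w : Fin N → ℝ := 1 ᵥ* Nmat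
  have hwM : w ᵥ* M⁻¹ = 1 := vecMul_vecMul_inv_eq_of_vecMul_sub_eq_zero hM
    (by rw [← hsplit, vecMul_sub, vecMul_one, vecMul_transpose, hP.2, sub_self])
  have hwT : w ᵥ* T = w := by rw [← vecMul_vecMul, hwM]
  have hw : 0 ≤ w := vecMul_nonneg zero_le_one hN_nn
  have hT : ∀ i j, 0 ≤ T i j := mul_apply_nonneg hMinv_nn hN_nn
  have hsupp : ∀ j, w j = 0 → ∀ i, T i j = 0 := fun _ hj =>
    mul_apply_eq_zero_of_one_vecMul_apply_eq_zero _ hN_nn hj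
  have heig : Module.End.eigenspace (toLin' T) 1 = ℝ ∙ π := by
    ext x
    rw [Module.End.mem_eigenspace_iff, toLin'_apply, one_smul, inv_mul_mulVec_eq_self_iff hM,
      ← hsplit, one_sub_transpose_mulVec_eq_zero_iff, hπ]
  have hwπ : w ⬝ᵥ π ≠ 0 := (dotProduct_pos_of_nonneg_of_pos hw
    (fun h => one_ne_zero (by rw [← hwM, h, zero_vecMul])) hπpos).ne'
  have hmult : T.charpoly.rootMultiplicity 1 = 1 := rootMultiplicity_charpoly_eq_one heig
    (fun h => (hπpos ⟨0, hN⟩).ne' (congrFun h _)) (by rw [hwT, one_smul]) hwπ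
  have hmultC : (T.map Complex.ofReal).charpoly.rootMultiplicity 1 = 1 := by
    have := rootMultiplicity_charpoly_map Complex.ofRealHom.injective T 1
    rwa [map_one, hmult] at this
  refine ⟨fun z hz => norm_le_one_of_isRoot_charpoly_map hT hw hwT.le hsupp hz, ?_, hmultC⟩
  exact (rootMultiplicity_pos (charpoly_monic _).ne_zero).1 (hmultC ▸ one_pos)
end

section
/- Let A be a complex block tridiagonal matrix with n block rows and columns, each block of size k×k; that is, A is indexed by pairs (i,a) with i ∈ {1,…,n}, a ∈ {1,…,k}, and A_{(i,a),(j,b)} = 0 whenever |i − j| > 1. Let M_GS be the block lower triangular part of A (the blocks with j ≤ i) and let M_S be the stair matrix of type 1 of A (the block matrix that keeps only the diagonal block A_{ii} in each odd-indexed block row i, and keeps the blocks A_{i,i−1}, A_{ii}, A_{i,i+1} in each even-indexed block row i). Assume M_GS and M_S are both invertible. Then the iteration matrices M_GS⁻¹(M_GS − A) and M_S⁻¹(M_S − A) have the same characteristic polynomial; in particular they have the same eigenvalues with the same algebraic multiplicities, and hence the same spectral radius. -/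
open Matrix Polynomial Finset

lemma my_eval_charpoly {m : Type*} [Fintype m] [DecidableEq m]
    (M : Matrix m m ℂ) (x : ℂ) :
    M.charpoly.eval x = (x • (1 : Matrix m m ℂ) - M).det := by
  rw [Matrix.charpoly, ← Polynomial.coe_evalRingHom, RingHom.map_det]
  congr 1
  ext p q
  by_cases h : p = q
  · subst h
    simp [charmatrix_apply_eq, Matrix.one_apply]
  · simp [charmatrix_apply_ne _ _ _ h, Matrix.one_apply_ne h]

lemma det_eq_prod_blocks {n k : ℕ} (M : Matrix (Fin n × Fin k) (Fin n × Fin k) ℂ)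
    (f : Fin n → ℕ) (hf : Function.Injective f)
    (hM : ∀ p q : Fin n × Fin k, f q.1 < f p.1 → M p q = 0) :
    M.det = ∏ i : Fin n, (Matrix.of fun a b : Fin k => M (i, a) (i, b)).det := by
  rcases Nat.eq_zero_or_pos k with hk | hk
  · subst hk
    simp [Matrix.det_isEmpty]
  · have hb : M.BlockTriangular (fun p => f p.1) := fun p q h => hM p q h
    rw [hb.det]
    have himg : (Finset.univ.image (fun p : Fin n × Fin k => f p.1)) = Finset.univ.image f := by
      ext v
      simp only [Finset.mem_image, Finset.mem_univ, true_and]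
      constructor
      · rintro ⟨p, rfl⟩; exact ⟨p.1, rfl⟩
      · rintro ⟨i, rfl⟩; exact ⟨(i, ⟨0, hk⟩), rfl⟩
    rw [himg, Finset.prod_image (fun a _ b _ h => hf h)]
    apply Finset.prod_congr rfl
    intro i _
    let e : Fin k ≃ {p : Fin n × Fin k // (fun p : Fin n × Fin k => f p.1) p = f i} :=
      { toFun := fun a => ⟨(i, a), rfl⟩
        invFun := fun p => p.1.2
        left_inv := fun a => rfl
        right_inv := fun p => Subtype.ext
          (Prod.ext (hf (show f (p.1).1 = f i from p.2)).symm rfl) }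
    rw [← Matrix.det_submatrix_equiv_self e]
    congr 1

theorem block_tridiagonal_stair_same_charpoly
    {n k : ℕ}
    (A : Matrix (Fin n × Fin k) (Fin n × Fin k) ℂ)
    -- A is block tridiagonal: the block (i, j) vanishes whenever |i - j| > 1
    (htri : ∀ (i j : Fin n) (a b : Fin k),
      (i.val + 1 < j.val ∨ j.val + 1 < i.val) → A (i, a) (j, b) = 0)
    -- the block lower triangular part of A (blocks with j ≤ i)
    (MGS : Matrix (Fin n × Fin k) (Fin n × Fin k) ℂ)
    (hMGS : MGS = Matrix.of fun p q : Fin n × Fin k =>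
      if q.1 ≤ p.1 then A p q else 0)
    -- the stair matrix of type 1 of A: odd-indexed (1-based) block rows keep only
    -- the diagonal block, even-indexed block rows keep the blocks with |i - j| ≤ 1
    (MS : Matrix (Fin n × Fin k) (Fin n × Fin k) ℂ)
    (hMS : MS = Matrix.of fun p q : Fin n × Fin k =>
      if Odd (p.1.val + 1) then
        (if q.1 = p.1 then A p q else 0)
      else
        (if p.1.val ≤ q.1.val + 1 ∧ q.1.val ≤ p.1.val + 1 then A p q else 0))
    (hGSinv : IsUnit MGS.det) (hSinv : IsUnit MS.det) :
    (MGS⁻¹ * (MGS - A)).charpoly = (MS⁻¹ * (MS - A)).charpoly := by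
  -- Step A: the two splitting matrices have the same determinant
  have hdGS : MGS.det = ∏ i : Fin n, (Matrix.of fun a b : Fin k => A (i, a) (i, b)).det := by
    rw [det_eq_prod_blocks MGS (fun i => n - i.val)
      (by intro a b h; change n - a.val = n - b.val at h
          have := a.isLt; have := b.isLt; ext; omega)
      (by
        intro p q h
        change n - q.1.val < n - p.1.val at h
        have h1 := p.1.isLt; have h2 := q.1.isLt
        rw [hMGS]
        simp only [Matrix.of_apply]
        rw [if_neg]
        rw [Fin.le_def]
        omega)]
    apply Finset.prod_congr rfl
    intro i _
    congr 1
    ext a b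
    rw [hMGS]
    simp
  have hdS : MS.det = ∏ i : Fin n, (Matrix.of fun a b : Fin k => A (i, a) (i, b)).det := by
    rw [det_eq_prod_blocks MS (fun i => if i.val % 2 = 1 then n - i.val else 2 * n - i.val)
      (by
        intro a b h
        change (if a.val % 2 = 1 then n - a.val else 2 * n - a.val)
          = (if b.val % 2 = 1 then n - b.val else 2 * n - b.val) at h
        have := a.isLt; have := b.isLt
        ext
        split_ifs at h <;> omega)
      (by
        intro p q h
        change (if q.1.val % 2 = 1 then n - q.1.val else 2 * n - q.1.val)
          < (if p.1.val % 2 = 1 then n - p.1.val else 2 * n - p.1.val) at h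
        have h1 := p.1.isLt; have h2 := q.1.isLt
        rw [hMS]
        simp only [Matrix.of_apply]
        by_cases ho : Odd (p.1.val + 1)
        · rw [if_pos ho, if_neg]
          intro hqp
          rw [hqp] at h
          exact lt_irrefl _ h
        · rw [if_neg ho, if_neg]
          rw [Nat.odd_iff] at ho
          intro ⟨hc1, hc2⟩
          -- p.1 has odd val, q within distance 1, q ≠ p
          by_cases hq : q.1.val % 2 = 1 <;> split_ifs at h <;> omega)]
    apply Finset.prod_congr rfl
    intro i _
    congr 1
    ext a b
    rw [hMS]
    by_cases ho : Odd (i.val + 1)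
    · simp [ho]
    · simp [ho]
  have hdet_eq : MGS.det = MS.det := hdGS.trans hdS.symm
  -- Step B: determinant identity via diagonal similarity
  have hdetB : ∀ x : ℂ, x ≠ 0 →
      ((x - 1) • MGS + A).det = ((x - 1) • MS + A).det := by
    intro x hx
    set d : Fin n × Fin k → ℂ := fun p => x ^ (n - p.1.val / 2) with hd
    have hcomm : Matrix.diagonal d * ((x - 1) • MGS + A)
        = ((x - 1) • MS + A) * Matrix.diagonal d := by
      ext p q
      rw [Matrix.diagonal_mul, Matrix.mul_diagonal]
      obtain ⟨i, a⟩ := p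
      obtain ⟨j, b⟩ := q
      have hin := i.2; have hjn := j.2
      rw [hMGS, hMS]
      simp only [Matrix.add_apply, Matrix.smul_apply, Matrix.of_apply, smul_eq_mul, hd]
      rcases lt_trichotomy i.val j.val with hij | hij | hij
      · -- i < j : strictly upper block
        rw [if_neg (by rw [Fin.le_def]; omega)]
        rcases eq_or_lt_of_le (Nat.succ_le_of_lt hij) with hadj | hfar
        · -- j = i + 1
          by_cases ho : Odd (i.val + 1)
          · rw [if_pos ho, if_neg (by intro hq; rw [hq] at hij; omega)]
            rw [Nat.odd_iff] at ho
            have he : n - i.val / 2 = n - j.val / 2 := by omega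
            rw [he]; ring
          · rw [if_neg ho, if_pos (by omega)]
            rw [Nat.odd_iff] at ho
            have he : n - i.val / 2 = (n - j.val / 2) + 1 := by omega
            rw [he, pow_succ]; ring
        · -- far apart
          have hA : A (i, a) (j, b) = 0 := htri i j a b (Or.inl hfar)
          rw [hA]
          by_cases ho : Odd (i.val + 1)
          · rw [if_pos ho, if_neg (by intro hq; rw [hq] at hij; omega)]; ring
          · rw [if_neg ho, if_neg (by omega)]; ring
      · -- i = j : diagonal block
        have : i = j := by ext; omega
        subst this
        rw [if_pos le_rfl]
        by_cases ho : Odd (i.val + 1)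
        · rw [if_pos ho, if_pos rfl]; ring
        · rw [if_neg ho, if_pos (by omega)]; ring
      · -- j < i : lower block
        rw [if_pos (by rw [Fin.le_def]; omega)]
        rcases eq_or_lt_of_le (Nat.succ_le_of_lt hij) with hadj | hfar
        · -- i = j + 1
          by_cases ho : Odd (i.val + 1)
          · rw [if_pos ho, if_neg (by intro hq; rw [hq] at hij; omega)]
            rw [Nat.odd_iff] at ho
            have he : n - j.val / 2 = (n - i.val / 2) + 1 := by omega
            rw [he, pow_succ]; ring
          · rw [if_neg ho, if_pos (by omega)]
            rw [Nat.odd_iff] at ho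
            have he : n - i.val / 2 = n - j.val / 2 := by omega
            rw [he]; ring
        · -- far apart
          have hA : A (i, a) (j, b) = 0 := htri i j a b (Or.inr hfar)
          rw [hA]
          by_cases ho : Odd (i.val + 1)
          · rw [if_pos ho, if_neg (by intro hq; rw [hq] at hij; omega)]; ring
          · rw [if_neg ho, if_neg (by omega)]; ring
    have hdetd : (Matrix.diagonal d).det ≠ 0 := by
      rw [Matrix.det_diagonal]
      exact Finset.prod_ne_zero_iff.mpr fun p _ => pow_ne_zero _ hx
    have hdm := congrArg Matrix.det hcomm
    rw [Matrix.det_mul, Matrix.det_mul] at hdm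
    apply mul_left_cancel₀ hdetd
    rw [hdm]; ring
  -- Step C: assemble
  apply Polynomial.eq_of_infinite_eval_eq
  apply Set.Infinite.mono (t := {x | eval x (MGS⁻¹ * (MGS - A)).charpoly
      = eval x (MS⁻¹ * (MS - A)).charpoly})
      ?_ ((Set.finite_singleton (0 : ℂ)).infinite_compl)
  intro x hx
  have hx0 : x ≠ 0 := by simpa using hx
  simp only [Set.mem_setOf_eq]
  rw [my_eval_charpoly, my_eval_charpoly]
  have h1 : x • (1 : Matrix (Fin n × Fin k) (Fin n × Fin k) ℂ) - MGS⁻¹ * (MGS - A)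
      = MGS⁻¹ * ((x - 1) • MGS + A) := by
    rw [Matrix.mul_add, Matrix.mul_sub, Matrix.mul_smul,
      Matrix.nonsing_inv_mul _ hGSinv]
    module
  have h2 : x • (1 : Matrix (Fin n × Fin k) (Fin n × Fin k) ℂ) - MS⁻¹ * (MS - A)
      = MS⁻¹ * ((x - 1) • MS + A) := by
    rw [Matrix.mul_add, Matrix.mul_sub, Matrix.mul_smul,
      Matrix.nonsing_inv_mul _ hSinv]
    module
  rw [h1, h2, Matrix.det_mul, Matrix.det_mul, Matrix.det_nonsing_inv,
    Matrix.det_nonsing_inv, hdet_eq, hdetB x hx0]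
end
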